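/- arXiv:1902.04938 — 5 statements merged into one kernel-verified Lean document; each statement's English description precedes it below -/
import Mathlib

section
/- For every temporal K-element 𝒯, K-coalescing is idempotent: coal(coal(𝒯)) = coal(𝒯). -/
open scoped Classical

namespace TemporalK

variable {K : Type*}

/-- An interval over the time domain `{0, ..., N-1}`: a pair `(b, e)` with `b < e ≤ N`. -/
abbrev TInterval (N : ℕ) := {I : Fin (N + 1) × Fin (N + 1) // I.1 < I.2}

/-- A temporal `K`-element: a function assigning to each interval an element of `K`. -/
abbrev TempEl (N : ℕ) (K : Type*) := TInterval N → K

/-- The interval `I = (b, e)` contains the time point `T` iff `b ≤ T < e`. -/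
def Contains {N : ℕ} (I : TInterval N) (T : ℕ) : Prop :=
  (I.val.1 : ℕ) ≤ T ∧ T < (I.val.2 : ℕ)

/-- The timeslice of `𝒯` at time point `T`: the sum of `𝒯 I` over all intervals `I`
containing `T`. -/
noncomputable def slice {N : ℕ} [CommSemiring K] (𝒯 : TempEl N K) (T : ℕ) : K :=
  ∑ I ∈ Finset.univ.filter (fun I : TInterval N => Contains I T), 𝒯 I

/-- `T` is an (annotation) changepoint of `𝒯` iff `T = 0` or the timeslices at `T - 1`
and `T` differ. -/
def Changepoint {N : ℕ} [CommSemiring K] (𝒯 : TempEl N K) (T : ℕ) : Prop :=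
  T = 0 ∨ slice 𝒯 (T - 1) ≠ slice 𝒯 T

/-- `I = (b, e)` is a changepoint interval of `𝒯` iff `b` is a changepoint, `e` is a
changepoint or equals `N`, and no time point strictly between `b` and `e` is a changepoint. -/
def CPInterval {N : ℕ} [CommSemiring K] (𝒯 : TempEl N K) (I : TInterval N) : Prop :=
  Changepoint 𝒯 (I.val.1 : ℕ) ∧
    (Changepoint 𝒯 (I.val.2 : ℕ) ∨ (I.val.2 : ℕ) = N) ∧
    ∀ T : ℕ, (I.val.1 : ℕ) < T → T < (I.val.2 : ℕ) → ¬ Changepoint 𝒯 T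

/-- `K`-coalescing: maps changepoint intervals `(b, e)` to the timeslice at `b` and all
other intervals to `0`. -/
noncomputable def coal {N : ℕ} [CommSemiring K] (𝒯 : TempEl N K) : TempEl N K :=
  fun I => if CPInterval 𝒯 I then slice 𝒯 (I.val.1 : ℕ) else 0

/-- Snapshot equivalence: equal timeslices at every time point. -/
def SnapEq {N : ℕ} [CommSemiring K] (k k' : TempEl N K) : Prop :=
  ∀ T : ℕ, T < N → slice k T = slice k' T

/-- A temporal `K`-element is coalesced iff it is the `K`-coalescing of some
temporal `K`-element. -/
def Coalesced {N : ℕ} [CommSemiring K] (k : TempEl N K) : Prop :=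
  ∃ 𝒯 : TempEl N K, k = coal 𝒯

/-- Pointwise addition of temporal `K`-elements. -/
def padd {N : ℕ} [CommSemiring K] (k k' : TempEl N K) : TempEl N K :=
  fun I => k I + k' I

/-- Pointwise multiplication of temporal `K`-elements:
`(k ·_P k')(I) = Σ k(I')·k'(I'')` over all pairs `(I', I'')` whose intersection is
nonempty and equals `I`. -/
noncomputable def pmul {N : ℕ} [CommSemiring K] (k k' : TempEl N K) : TempEl N K :=
  fun I =>
    ∑ p ∈ Finset.univ.filter (fun p : TInterval N × TInterval N =>
        max (p.1.val.1 : ℕ) (p.2.val.1 : ℕ) < min (p.1.val.2 : ℕ) (p.2.val.2 : ℕ) ∧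
        (I.val.1 : ℕ) = max (p.1.val.1 : ℕ) (p.2.val.1 : ℕ) ∧
        (I.val.2 : ℕ) = min (p.1.val.2 : ℕ) (p.2.val.2 : ℕ)),
      k p.1 * k' p.2

/-- Addition of the period semiring: coalesced pointwise addition. -/
noncomputable def tadd {N : ℕ} [CommSemiring K] (k k' : TempEl N K) : TempEl N K :=
  coal (padd k k')

/-- Multiplication of the period semiring: coalesced pointwise multiplication. -/
noncomputable def tmul {N : ℕ} [CommSemiring K] (k k' : TempEl N K) : TempEl N K :=
  coal (pmul k k')

/-- The zero of the period semiring: maps every interval to `0`. -/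
def zeroT (N : ℕ) (K : Type*) [CommSemiring K] : TempEl N K := fun _ => 0

/-- The one of the period semiring: maps the interval `(0, N)` to `1` and every other
interval to `0`. -/
def oneT (N : ℕ) (K : Type*) [CommSemiring K] : TempEl N K :=
  fun I => if (I.val.1 : ℕ) = 0 ∧ (I.val.2 : ℕ) = N then 1 else 0

/-- Encoding of an annotation history `f : time points → K` as a coalesced temporal
`K`-element: coalesce the element assigning `f T` to each singleton interval `(T, T+1)`. -/
noncomputable def enc {N : ℕ} [CommSemiring K] (f : Fin N → K) : TempEl N K :=
  coal (fun I =>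
    if h : (I.val.2 : ℕ) = (I.val.1 : ℕ) + 1 then
      f ⟨(I.val.1 : ℕ), by have := I.val.2.isLt; omega⟩
    else 0)

/-- The natural preorder of the semiring `K`. -/
def nle [CommSemiring K] (a b : K) : Prop := ∃ c, a + c = b

/-- The natural preorder of the period semiring (on coalesced temporal `K`-elements). -/
def tle {N : ℕ} [CommSemiring K] (k k' : TempEl N K) : Prop :=
  ∃ k'' : TempEl N K, Coalesced k'' ∧ tadd k k'' = k'

/-- The pointwise monus: assigns `τ_T(k) −_K τ_T(k')` to each singleton interval
`(T, T+1)` and `0` to every non-singleton interval. -/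
noncomputable def pmonus {N : ℕ} [CommSemiring K] (monus : K → K → K)
    (k k' : TempEl N K) : TempEl N K :=
  fun I =>
    if (I.val.2 : ℕ) = (I.val.1 : ℕ) + 1 then
      monus (slice k (I.val.1 : ℕ)) (slice k' (I.val.1 : ℕ))
    else 0

/-- The monus of the period semiring: coalesced pointwise monus. -/
noncomputable def tmonus {N : ℕ} [CommSemiring K] (monus : K → K → K)
    (k k' : TempEl N K) : TempEl N K :=
  coal (pmonus monus k k')

end TemporalK

open TemporalK

/-! Coalescing preserves every timeslice `τ_T` with `T < N`, since each such `T` lies in exactly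
one changepoint interval, on which the timeslice is constant. And `coal 𝒯` depends on `𝒯` only
through these timeslices, so `coal (coal 𝒯) = coal 𝒯`. -/

namespace TemporalK

variable {N : ℕ} {K : Type*} [CommSemiring K] {k k' : TempEl N K}

theorem changepoint_zero (𝒯 : TempEl N K) : Changepoint 𝒯 0 :=
  Or.inl rfl

theorem slice_eq_of_forall_not_changepoint (𝒯 : TempEl N K) {b T : ℕ} (hbT : b ≤ T)
    (h : ∀ S, b < S → S ≤ T → ¬Changepoint 𝒯 S) : slice 𝒯 T = slice 𝒯 b := by
  induction T, hbT using Nat.le_induction with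
  | base => rfl
  | succ T hbT ih =>
    have hS : ¬Changepoint 𝒯 (T + 1) := h (T + 1) (by omega) le_rfl
    simp only [Changepoint, Nat.add_sub_cancel, not_or, not_not] at hS
    rw [← hS.2, ih fun S h₁ h₂ => h S h₁ (by omega)]

/-- The changepoint interval containing `T` runs from the last changepoint `≤ T` to the first
changepoint `> T` (or to `N`). -/
theorem exists_cpInterval_contains (𝒯 : TempEl N K) {T : ℕ} (hT : T < N) :
    ∃ I : TInterval N, Contains I T ∧ CPInterval 𝒯 I := by
  set b := Nat.findGreatest (Changepoint 𝒯) T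
  have hbT : b ≤ T := Nat.findGreatest_le T
  have hb : Changepoint 𝒯 b := Nat.findGreatest_spec (Nat.zero_le T) (changepoint_zero 𝒯)
  have hend : ∃ S, T < S ∧ (Changepoint 𝒯 S ∨ S = N) := ⟨N, hT, Or.inr rfl⟩
  set e := Nat.find hend
  obtain ⟨hTe, he⟩ : T < e ∧ (Changepoint 𝒯 e ∨ e = N) := Nat.find_spec hend
  have heN : e ≤ N := Nat.find_min' hend ⟨hT, Or.inr rfl⟩
  refine ⟨⟨(⟨b, by omega⟩, ⟨e, by omega⟩), Fin.mk_lt_mk.2 (by omega)⟩, ⟨hbT, hTe⟩, hb, he, ?_⟩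
  intro S hbS hSe hS
  rcases le_or_gt S T with hST | hTS
  · exact Nat.findGreatest_is_greatest hbS hST hS
  · exact Nat.find_min hend hSe ⟨hTS, Or.inl hS⟩

theorem CPInterval.le_of_contains (𝒯 : TempEl N K) {I J : TInterval N} {T : ℕ}
    (hI : CPInterval 𝒯 I) (hJ : CPInterval 𝒯 J) (hIT : Contains I T) (hJT : Contains J T) :
    (I.val.1 : ℕ) ≤ J.val.1 ∧ (I.val.2 : ℕ) ≤ J.val.2 := by
  obtain ⟨hIb, hIe, hIin⟩ := hI
  obtain ⟨hJb, hJe, hJin⟩ := hJ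
  have hIN : (I.val.2 : ℕ) ≤ N := Nat.lt_succ_iff.1 I.val.2.isLt
  unfold Contains at hIT hJT
  constructor
  · by_contra! hlt
    exact hJin _ hlt (by omega) hIb
  · by_contra! hlt
    rcases hJe with hJe | hJe
    · exact hIin _ (by omega) hlt hJe
    · omega

theorem CPInterval.eq_of_contains (𝒯 : TempEl N K) {I J : TInterval N} {T : ℕ}
    (hI : CPInterval 𝒯 I) (hJ : CPInterval 𝒯 J) (hIT : Contains I T) (hJT : Contains J T) :
    I = J := by
  obtain ⟨hb, he⟩ := hI.le_of_contains 𝒯 hJ hIT hJT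
  obtain ⟨hb', he'⟩ := hJ.le_of_contains 𝒯 hI hJT hIT
  exact Subtype.ext (Prod.ext (Fin.ext (le_antisymm hb hb')) (Fin.ext (le_antisymm he he')))

theorem snapEq_coal (𝒯 : TempEl N K) : SnapEq (coal 𝒯) 𝒯 := by
  intro T hT
  obtain ⟨I, hIT, hI⟩ := exists_cpInterval_contains 𝒯 hT
  have hmem : I ∈ Finset.univ.filter (fun J : TInterval N => Contains J T) := by simpa using hIT
  calc slice (coal 𝒯) T = coal 𝒯 I := by
        refine Finset.sum_eq_single_of_mem I hmem fun J hJT hJI => if_neg fun hJ => hJI ?_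
        exact hJ.eq_of_contains 𝒯 hI (by simpa using hJT) hIT
    _ = slice 𝒯 I.val.1 := if_pos hI
    _ = slice 𝒯 T :=
        (slice_eq_of_forall_not_changepoint 𝒯 hIT.1 fun S hS hST =>
          hI.2.2 S hS (lt_of_le_of_lt hST hIT.2)).symm

theorem SnapEq.changepoint_iff (h : SnapEq k k') {T : ℕ} (hT : T < N) :
    Changepoint k T ↔ Changepoint k' T := by
  rw [Changepoint, Changepoint, h T hT, h (T - 1) (by omega)]

theorem SnapEq.cpInterval_iff (h : SnapEq k k') (I : TInterval N) :
    CPInterval k I ↔ CPInterval k' I := by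
  have hbe : (I.val.1 : ℕ) < I.val.2 := I.prop
  have heN : (I.val.2 : ℕ) ≤ N := Nat.lt_succ_iff.1 I.val.2.isLt
  have hend : (Changepoint k I.val.2 ∨ (I.val.2 : ℕ) = N) ↔
      (Changepoint k' I.val.2 ∨ (I.val.2 : ℕ) = N) := by
    rcases heN.lt_or_eq with he | he
    · rw [h.changepoint_iff he]
    · simp only [he, or_true]
  rw [CPInterval, CPInterval, h.changepoint_iff (by omega), hend]
  refine and_congr_right' (and_congr_right' (forall_congr' fun T => ?_))
  exact imp_congr_right fun _ => imp_congr_right fun hT => not_congr (h.changepoint_iff (by omega))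

theorem SnapEq.coal_eq (h : SnapEq k k') : coal k = coal k' := by
  funext I
  have hb : (I.val.1 : ℕ) < N := lt_of_lt_of_le I.prop (Nat.lt_succ_iff.1 I.val.2.isLt)
  simp only [coal, h.cpInterval_iff, h _ hb]

end TemporalK

theorem coal_idempotent_general {N : ℕ} {K : Type*} [CommSemiring K]
    (𝒯 : TempEl N K) :
    coal (coal 𝒯) = coal 𝒯 :=
  (snapEq_coal 𝒯).coal_eq

theorem coal_idempotent {N : ℕ} (hN : 1 ≤ N) {K : Type*} [CommSemiring K]
    (𝒯 : TempEl N K) :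
    coal (coal 𝒯) = coal 𝒯 :=
  coal_idempotent_general 𝒯
end

section
/- For all temporal K-elements 𝒯₁ and 𝒯₂: 𝒯₁ ~ 𝒯₂ if and only if coal(𝒯₁) = coal(𝒯₂). (Uniqueness of the coalesced normal form.) -/
open scoped Classical

open TemporalK

lemma aux_slice_zero {K : Type*} [CommSemiring K] {N : ℕ} (𝒯 : TempEl N K) {T : ℕ}
    (hT : N ≤ T) : slice 𝒯 T = 0 := by
  unfold TemporalK.slice
  apply Finset.sum_eq_zero
  intro I hI
  rw [Finset.mem_filter] at hI
  simp only [Finset.mem_filter, Contains] at hI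
  have := I.val.2.isLt
  omega

lemma aux_slice_const {K : Type*} [CommSemiring K] {N : ℕ} (𝒯 : TempEl N K) {b T : ℕ}
    (hb : b ≤ T) (h : ∀ k, b < k → k ≤ T → ¬ Changepoint 𝒯 k) :
    slice 𝒯 b = slice 𝒯 T := by
  induction T, hb using Nat.le_induction with
  | base => rfl
  | succ n hn ih =>
    have h1 : ¬ Changepoint 𝒯 (n + 1) := h (n + 1) (by omega) le_rfl
    rw [ih (fun k hk1 hk2 => h k hk1 (by omega))]
    unfold Changepoint at h1
    push_neg at h1
    simpa using h1.2

lemma aux_slice_coal {K : Type*} [CommSemiring K] {N : ℕ} (𝒯 : TempEl N K) {T : ℕ}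
    (hT : T < N) : slice (coal 𝒯) T = slice 𝒯 T := by
  classical
  have cp0 : Changepoint 𝒯 0 := Or.inl rfl
  set b := Nat.findGreatest (Changepoint 𝒯) T with hbdef
  have hbT : b ≤ T := Nat.findGreatest_le T
  have hbcp : Changepoint 𝒯 b := Nat.findGreatest_spec (Nat.zero_le T) cp0
  have hex : ∃ m, T < m ∧ (Changepoint 𝒯 m ∨ m = N) := ⟨N, hT, Or.inr rfl⟩
  set e := Nat.find hex with hedef
  obtain ⟨hTe, hecp⟩ := Nat.find_spec hex
  have heN : e ≤ N := Nat.find_min' hex ⟨hT, Or.inr rfl⟩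
  have hnocp : ∀ k, b < k → k < e → ¬ Changepoint 𝒯 k := by
    intro k hk1 hk2 hc
    by_cases hkT : k ≤ T
    · exact Nat.findGreatest_is_greatest hk1 hkT hc
    · exact (Nat.find_min hex hk2) ⟨by omega, Or.inl hc⟩
  have hbe : b < e := lt_of_le_of_lt hbT hTe
  have hbN : b < N + 1 := by omega
  have heN' : e < N + 1 := by omega
  set I0 : TInterval N := ⟨(⟨b, hbN⟩, ⟨e, heN'⟩), by simpa [Fin.lt_def] using hbe⟩ with hI0
  have hcpi : CPInterval 𝒯 I0 := by
    refine ⟨?_, ?_, ?_⟩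
    · simpa [hI0] using hbcp
    · simpa [hI0] using hecp
    · intro k h1 h2
      exact hnocp k (by simpa [hI0] using h1) (by simpa [hI0] using h2)
  have hconst : slice 𝒯 b = slice 𝒯 T :=
    aux_slice_const 𝒯 hbT (fun k h1 h2 => hnocp k h1 (by omega))
  have hmem : I0 ∈ Finset.univ.filter (fun I : TInterval N => Contains I T) := by
    rw [Finset.mem_filter]
    simp only [Finset.mem_filter, Finset.mem_univ, true_and, Contains, hI0]
    exact ⟨hbT, hTe⟩
  have hsum : slice (coal 𝒯) T = coal 𝒯 I0 := by
    unfold TemporalK.slice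
    apply Finset.sum_eq_single_of_mem I0 hmem
    intro I hI hne
    rw [Finset.mem_filter] at hI
    simp only [Finset.mem_filter, Finset.mem_univ, true_and, Contains] at hI
    unfold coal
    rw [if_neg]
    intro hcpI
    apply hne
    obtain ⟨hcpb', hcpe', hnone'⟩ := hcpI
    set b' := (I.val.1 : ℕ)
    set e' := (I.val.2 : ℕ)
    have hb'b : b' ≤ b := Nat.le_findGreatest hI.1 hcpb'
    have hbb' : b' = b := by
      by_contra hlt
      exact hnone' b (by omega) (by omega) hbcp
    have hee' : e ≤ e' := Nat.find_min' hex ⟨hI.2, hcpe'⟩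
    have he'e : e' = e := by
      by_contra hlt
      have heCP : Changepoint 𝒯 e := by
        rcases hecp with h | h
        · exact h
        · exfalso
          have := I.val.2.isLt
          omega
      exact hnone' e (by omega) (by omega) heCP
    apply Subtype.ext
    apply Prod.ext
    · exact Fin.ext hbb'
    · exact Fin.ext he'e
  rw [hsum]
  unfold coal
  rw [if_pos hcpi]
  simpa [hI0] using hconst

theorem coal_unique {N : ℕ} (hN : 1 ≤ N) {K : Type*} [CommSemiring K]
    (𝒯₁ 𝒯₂ : TempEl N K) :
    SnapEq 𝒯₁ 𝒯₂ ↔ coal 𝒯₁ = coal 𝒯₂ := by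
  constructor
  · intro h
    have hsl : ∀ T : ℕ, slice 𝒯₁ T = slice 𝒯₂ T := by
      intro T
      by_cases hT : T < N
      · exact h T hT
      · rw [aux_slice_zero 𝒯₁ (by omega), aux_slice_zero 𝒯₂ (by omega)]
    have hcp : ∀ T : ℕ, Changepoint 𝒯₁ T ↔ Changepoint 𝒯₂ T := by
      intro T
      unfold Changepoint
      rw [hsl (T - 1), hsl T]
    have hcpi : ∀ I : TInterval N, CPInterval 𝒯₁ I ↔ CPInterval 𝒯₂ I := by
      intro I
      unfold CPInterval
      constructor
      · rintro ⟨h1, h2, h3⟩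
        refine ⟨(hcp _).1 h1, ?_, fun T hT1 hT2 hc => h3 T hT1 hT2 ((hcp T).2 hc)⟩
        rcases h2 with h2 | h2
        · exact Or.inl ((hcp _).1 h2)
        · exact Or.inr h2
      · rintro ⟨h1, h2, h3⟩
        refine ⟨(hcp _).2 h1, ?_, fun T hT1 hT2 hc => h3 T hT1 hT2 ((hcp T).1 hc)⟩
        rcases h2 with h2 | h2
        · exact Or.inl ((hcp _).2 h2)
        · exact Or.inr h2
    funext I
    unfold coal
    by_cases hI : CPInterval 𝒯₁ I
    · rw [if_pos hI, if_pos ((hcpi I).1 hI), hsl]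
    · rw [if_neg hI, if_neg (fun hc => hI ((hcpi I).2 hc))]
  · intro h T hT
    rw [← aux_slice_coal 𝒯₁ hT, ← aux_slice_coal 𝒯₂ hT, h]
end

section
/- Pointwise multiplication of temporal K-elements is associative: for all temporal K-elements k, k', k'' we have (k ·_P k') ·_P k'' = k ·_P (k' ·_P k''). -/
open scoped Classical

open TemporalK

/-!
Intersection of intervals is an associative partial operation on intervals, `none` standing
for the empty intersection, and `pmul` is convolution along it. Convolution along any
associative partial operation is associative: both bracketings of `(f * g) * h` at `i` are the
sum of `f a * g b * h c` over the triples whose threefold product is `i`.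
-/

section PartialConvolution

variable {ι R : Type*} [Fintype ι] [DecidableEq ι] [CommSemiring R]

/-- The product of the contracted semigroup algebra when `op` is associative; `none` plays
the role of the adjoined zero. -/
noncomputable def partialConv (op : ι → ι → Option ι) (f g : ι → R) (i : ι) : R :=
  ∑ p ∈ Finset.univ.filter (fun p : ι × ι => op p.1 p.2 = some i), f p.1 * g p.2

theorem partialConv_eq_sum_ite (op : ι → ι → Option ι) (f g : ι → R) (i : ι) :
    partialConv op f g i = ∑ a, ∑ b, if op a b = some i then f a * g b else 0 := by
  rw [partialConv, Finset.sum_filter, Fintype.sum_prod_type]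

theorem sum_ite_bind_eq_some (o : Option ι) (F : ι → Option ι) (i : ι) (v : R) :
    ∑ x, (if o = some x ∧ F x = some i then v else 0) =
      if o.bind F = some i then v else 0 := by
  cases o with
  | none => simp
  | some x₀ => simp [ite_and]

theorem partialConv_partialConv_left (op : ι → ι → Option ι) (f g h : ι → R) (i : ι) :
    partialConv op (partialConv op f g) h i =
      ∑ a, ∑ b, ∑ c, if (op a b).bind (op · c) = some i then f a * g b * h c else 0 := by
  simp only [partialConv_eq_sum_ite, Finset.sum_mul, ite_mul, zero_mul, Finset.ite_sum_zero,
    ← sum_ite_bind_eq_some, ← ite_and]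
  rw [Finset.sum_comm]
  simp only [and_comm]
  exact (Finset.sum_congr rfl fun c _ => Finset.sum_comm_cycle.symm).trans
    Finset.sum_comm_cycle.symm

theorem partialConv_partialConv_right (op : ι → ι → Option ι) (f g h : ι → R) (i : ι) :
    partialConv op f (partialConv op g h) i =
      ∑ a, ∑ b, ∑ c, if (op b c).bind (op a ·) = some i then f a * (g b * h c) else 0 := by
  simp only [partialConv_eq_sum_ite, Finset.mul_sum, mul_ite, mul_zero, Finset.ite_sum_zero,
    ← sum_ite_bind_eq_some, ← ite_and]
  refine Finset.sum_congr rfl fun a _ => ?_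
  rw [← Finset.sum_comm_cycle]
  simp only [and_comm]

theorem partialConv_assoc {op : ι → ι → Option ι}
    (hop : ∀ a b c, (op a b).bind (op · c) = (op b c).bind (op a ·)) (f g h : ι → R) :
    partialConv op (partialConv op f g) h = partialConv op f (partialConv op g h) := by
  funext i
  simp only [partialConv_partialConv_left, partialConv_partialConv_right, hop, mul_assoc]

end PartialConvolution

namespace TemporalK

variable {N : ℕ}

def TInterval.inter (I J : TInterval N) : Option (TInterval N) :=
  if h : max I.1.1 J.1.1 < min I.1.2 J.1.2 then some ⟨(max I.1.1 J.1.1, min I.1.2 J.1.2), h⟩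
  else none

theorem TInterval.inter_eq_some_iff {I J M : TInterval N} :
    I.inter J = some M ↔
      (M.1.1 : ℕ) = max (I.1.1 : ℕ) J.1.1 ∧ (M.1.2 : ℕ) = min (I.1.2 : ℕ) J.1.2 := by
  have hM : (M.1.1 : ℕ) < M.1.2 := M.2
  unfold inter
  split_ifs with h
  · simp only [Option.some.injEq, Subtype.ext_iff, Prod.ext_iff, Fin.ext_iff, Fin.coe_max,
      Fin.coe_min, eq_comm]
  · simp only [false_iff, not_and]
    intro h₁ h₂
    exact h (Fin.lt_def.mpr (by simp only [Fin.coe_max, Fin.coe_min]; omega))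

theorem TInterval.inter_comm (I J : TInterval N) : I.inter J = J.inter I := by
  simp only [inter, max_comm, min_comm]

theorem TInterval.bind_inter_eq_some_iff {I J L M : TInterval N} :
    (I.inter J).bind (·.inter L) = some M ↔
      (M.1.1 : ℕ) = max (max (I.1.1 : ℕ) J.1.1) L.1.1 ∧
        (M.1.2 : ℕ) = min (min (I.1.2 : ℕ) J.1.2) L.1.2 := by
  rw [Option.bind_eq_some_iff]
  constructor
  · rintro ⟨X, hX, hXM⟩
    rw [inter_eq_some_iff] at hX hXM
    omega
  · rintro ⟨h₁, h₂⟩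
    have hM : (M.1.1 : ℕ) < M.1.2 := M.2
    refine ⟨⟨(max I.1.1 J.1.1, min I.1.2 J.1.2), ?_⟩, ?_, ?_⟩
    · simp only [Fin.lt_def, Fin.coe_max, Fin.coe_min]
      omega
    · exact inter_eq_some_iff.mpr ⟨Fin.coe_max _ _, Fin.coe_min _ _⟩
    · exact inter_eq_some_iff.mpr (by simp only [Fin.coe_max, Fin.coe_min]; omega)

theorem TInterval.inter_assoc (I J L : TInterval N) :
    (I.inter J).bind (·.inter L) = (J.inter L).bind (I.inter ·) := by
  refine Option.ext fun M => ?_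
  simp only [inter_comm I, bind_inter_eq_some_iff]
  omega

theorem pmul_eq_partialConv {K : Type*} [CommSemiring K] (k k' : TempEl N K) :
    pmul k k' = partialConv TInterval.inter k k' := by
  funext I
  refine Finset.sum_congr (Finset.filter_congr fun p _ => ?_) fun _ _ => rfl
  have hI : (I.1.1 : ℕ) < I.1.2 := I.2
  rw [TInterval.inter_eq_some_iff]
  omega

end TemporalK

theorem pmul_assoc_general {N : ℕ} {K : Type*} [CommSemiring K]
    (k k' k'' : TempEl N K) :
    pmul (pmul k k') k'' = pmul k (pmul k' k'') := by
  simp only [pmul_eq_partialConv]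
  exact partialConv_assoc TInterval.inter_assoc k k' k''

theorem pmul_assoc {N : ℕ} (hN : 1 ≤ N) {K : Type*} [CommSemiring K]
    (k k' k'' : TempEl N K) :
    pmul (pmul k k') k'' = pmul k (pmul k' k'') :=
  pmul_assoc_general k k' k''
end

section
/- Multiplication of coalesced temporal K-elements is associative: for all coalesced temporal K-elements k, k', k'' we have (k ·_T k') ·_T k'' = k ·_T (k' ·_T k''). -/
open scoped Classical

open TemporalK

section AuxLemmas

variable {N : ℕ} {K : Type*} [CommSemiring K]

lemma slice_of_ge (k : TempEl N K) {T : ℕ} (hT : N ≤ T) : slice k T = 0 := by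
  unfold TemporalK.slice
  apply Finset.sum_eq_zero
  intro I hI
  simp only [Finset.mem_filter] at hI
  simp only [Contains] at hI
  exfalso
  have := I.val.2.isLt
  omega

lemma slice_pmul (k k' : TempEl N K) (T : ℕ) :
    slice (pmul k k') T = slice k T * slice k' T := by
  classical
  unfold TemporalK.slice TemporalK.pmul
  rw [Finset.sum_mul_sum]
  have hdisj : (↑(Finset.univ.filter (fun I : TInterval N => Contains I T)) :
      Set (TInterval N)).PairwiseDisjoint
      (fun I : TInterval N => Finset.univ.filter
        (fun p : TInterval N × TInterval N =>
          max (p.1.val.1 : ℕ) (p.2.val.1 : ℕ) < min (p.1.val.2 : ℕ) (p.2.val.2 : ℕ) ∧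
          (I.val.1 : ℕ) = max (p.1.val.1 : ℕ) (p.2.val.1 : ℕ) ∧
          (I.val.2 : ℕ) = min (p.1.val.2 : ℕ) (p.2.val.2 : ℕ))) := by
    intro I hI J hJ hIJ
    simp only [Finset.disjoint_left, Finset.mem_filter]
    intro p hp hq
    apply hIJ
    apply Subtype.ext
    apply Prod.ext <;> apply Fin.ext
    · rw [hp.2.2.1, hq.2.2.1]
    · rw [hp.2.2.2, hq.2.2.2]
  rw [← Finset.sum_biUnion hdisj]
  have hset : (Finset.univ.filter (fun I : TInterval N => Contains I T)).biUnion
      (fun I : TInterval N => Finset.univ.filter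
        (fun p : TInterval N × TInterval N =>
          max (p.1.val.1 : ℕ) (p.2.val.1 : ℕ) < min (p.1.val.2 : ℕ) (p.2.val.2 : ℕ) ∧
          (I.val.1 : ℕ) = max (p.1.val.1 : ℕ) (p.2.val.1 : ℕ) ∧
          (I.val.2 : ℕ) = min (p.1.val.2 : ℕ) (p.2.val.2 : ℕ)))
      = (Finset.univ.filter (fun I : TInterval N => Contains I T)) ×ˢ
        (Finset.univ.filter (fun I : TInterval N => Contains I T)) := by
    ext p
    simp only [Finset.mem_biUnion, Finset.mem_filter, Finset.mem_product, Finset.mem_univ,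
      true_and]
    simp only [Contains]
    constructor
    · rintro ⟨I, hIcont, hlt, h1, h2⟩
      omega
    · rintro ⟨⟨h1, h2⟩, ⟨h3, h4⟩⟩
      have hlt : max (p.1.val.1 : ℕ) (p.2.val.1 : ℕ) < min (p.1.val.2 : ℕ) (p.2.val.2 : ℕ) := by
        omega
      have hle2 : min (p.1.val.2 : ℕ) (p.2.val.2 : ℕ) < N + 1 := by
        have := p.1.val.2.isLt; have := p.2.val.2.isLt; omega
      refine ⟨⟨(⟨max (p.1.val.1 : ℕ) (p.2.val.1 : ℕ), by omega⟩,
        ⟨min (p.1.val.2 : ℕ) (p.2.val.2 : ℕ), hle2⟩), ?_⟩, ?_, hlt, rfl, rfl⟩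
      · exact Fin.mk_lt_mk.mpr hlt
      · simp only []
        omega
  rw [hset, Finset.sum_product]

lemma slice_coal (𝒯 : TempEl N K) (T : ℕ) : slice (coal 𝒯) T = slice 𝒯 T := by
  classical
  by_cases hT : T < N
  swap
  · rw [slice_of_ge _ (le_of_not_gt hT), slice_of_ge _ (le_of_not_gt hT)]
  -- the greatest changepoint ≤ T
  set b := Nat.findGreatest (fun S => Changepoint 𝒯 S) T with hbdef
  have hbcp : Changepoint 𝒯 b := Nat.findGreatest_spec (Nat.zero_le T) (Or.inl rfl)
  have hbT : b ≤ T := Nat.findGreatest_le T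
  have hbmax : ∀ S, b < S → S ≤ T → ¬ Changepoint 𝒯 S := fun S h1 h2 =>
    Nat.findGreatest_is_greatest h1 h2
  -- the least end point > T
  have hex : ∃ S, T < S ∧ S ≤ N ∧ (Changepoint 𝒯 S ∨ S = N) :=
    ⟨N, hT, le_refl N, Or.inr rfl⟩
  set e := Nat.find hex with hedef
  obtain ⟨heT, heN, hecp⟩ := Nat.find_spec hex
  have hemin : ∀ S, T < S → S < e → ¬ Changepoint 𝒯 S := by
    intro S h1 h2 hc
    exact Nat.find_min hex h2 ⟨h1, le_trans (le_of_lt h2) heN, Or.inl hc⟩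
  have hnocp : ∀ S, b < S → S < e → ¬ Changepoint 𝒯 S := by
    intro S h1 h2
    rcases le_or_gt S T with h | h
    · exact hbmax S h1 h
    · exact hemin S h h2
  -- slice is constant on [b, T]
  have hconst : ∀ S, b ≤ S → S ≤ T → slice 𝒯 S = slice 𝒯 b := by
    intro S
    induction S with
    | zero => intro h1 _; rw [Nat.le_zero.mp h1]
    | succ n ih =>
      intro h1 h2
      rcases Nat.lt_or_ge n b with h | h
      · have : b = n + 1 := by omega
        rw [this]
      · have hnc : ¬ Changepoint 𝒯 (n + 1) := hbmax (n + 1) (by omega) h2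
        unfold Changepoint at hnc
        push_neg at hnc
        have : slice 𝒯 n = slice 𝒯 (n + 1) := by
          have := hnc.2; simpa using this
        rw [← this, ih h (by omega)]
  have hbe : b < e := lt_of_le_of_lt hbT heT
  -- the unique changepoint interval containing T
  have hbN : b < N + 1 := by omega
  have heN1 : e < N + 1 := by omega
  set I₀ : TInterval N := ⟨(⟨b, hbN⟩, ⟨e, heN1⟩), Fin.mk_lt_mk.mpr hbe⟩ with hI0
  have hI0b : (I₀.val.1 : ℕ) = b := rfl
  have hI0e : (I₀.val.2 : ℕ) = e := rfl
  have hCP : CPInterval 𝒯 I₀ := by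
    refine ⟨hbcp, ?_, ?_⟩
    · rw [hI0e]; exact hecp
    · intro S h1 h2
      exact hnocp S h1 h2
  have hmem : I₀ ∈ Finset.univ.filter (fun I : TInterval N => Contains I T) := by
    simp only [Finset.mem_filter, Finset.mem_univ, true_and]
    simp only [Contains]
    exact ⟨hbT, heT⟩
  have huniq : ∀ I : TInterval N,
      I ∈ Finset.univ.filter (fun I : TInterval N => Contains I T) → I ≠ I₀ →
      coal 𝒯 I = 0 := by
    intro I hI hne
    simp only [Finset.mem_filter, Finset.mem_univ, true_and] at hI
    simp only [Contains] at hI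
    unfold coal
    rw [if_neg]
    intro hCPI
    apply hne
    obtain ⟨hb', he', hin'⟩ := hCPI
    -- b' = b
    have hble : (I.val.1 : ℕ) ≤ b := Nat.le_findGreatest hI.1 hb'
    have hbeq : (I.val.1 : ℕ) = b := by
      by_contra hne'
      exact hin' b (lt_of_le_of_ne hble hne') (lt_of_le_of_lt hbT hI.2) hbcp
    -- e' = e
    have hele : e ≤ (I.val.2 : ℕ) := by
      apply Nat.find_min' hex
      refine ⟨hI.2, ?_, he'⟩
      have := I.val.2.isLt; omega
    have heeq : (I.val.2 : ℕ) = e := by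
      by_contra hne'
      have helt : e < (I.val.2 : ℕ) := lt_of_le_of_ne hele (Ne.symm hne')
      have heCP : Changepoint 𝒯 e := by
        rcases hecp with h | h
        · exact h
        · exfalso; have := I.val.2.isLt; omega
      exact hin' e (by omega) helt heCP
    apply Subtype.ext
    apply Prod.ext <;> apply Fin.ext
    · exact hbeq
    · exact heeq
  have : slice (coal 𝒯) T = coal 𝒯 I₀ := by
    unfold TemporalK.slice
    exact Finset.sum_eq_single_of_mem I₀ hmem huniq
  rw [this]
  unfold coal
  rw [if_pos hCP, hI0b, hconst T hbT le_rfl]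

lemma coal_congr {𝒯 𝒯' : TempEl N K} (h : ∀ T : ℕ, slice 𝒯 T = slice 𝒯' T) :
    coal 𝒯 = coal 𝒯' := by
  have hc : ∀ T : ℕ, Changepoint 𝒯 T ↔ Changepoint 𝒯' T := by
    intro T
    unfold Changepoint
    rw [h (T - 1), h T]
  have hcp : ∀ I : TInterval N, CPInterval 𝒯 I ↔ CPInterval 𝒯' I := by
    intro I
    unfold CPInterval
    simp only [hc]
  funext I
  unfold coal
  rw [h (I.val.1 : ℕ)]
  by_cases hI : CPInterval 𝒯 I
  · rw [if_pos hI, if_pos ((hcp I).mp hI)]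
  · rw [if_neg hI, if_neg (fun hI' => hI ((hcp I).mpr hI'))]

end AuxLemmas

theorem tmul_assoc {N : ℕ} (hN : 1 ≤ N) {K : Type*} [CommSemiring K]
    (k k' k'' : TempEl N K)
    (hk : Coalesced k) (hk' : Coalesced k') (hk'' : Coalesced k'') :
    tmul (tmul k k') k'' = tmul k (tmul k' k'') := by
  unfold tmul
  apply coal_congr
  intro T
  rw [slice_pmul, slice_pmul, slice_coal, slice_coal, slice_pmul, slice_pmul, mul_assoc]
end

section
/- The encoding map E is a bijection from annotation histories onto coalesced temporal K-elements: E is injective, and a temporal K-element lies in the range of E if and only if it is coalesced. -/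
open scoped Classical

open TemporalK

namespace TemporalKAux

open TemporalK

variable {K : Type*} {N : ℕ} [CommSemiring K]

lemma slice_eq_zero_of_ge (k : TempEl N K) {T : ℕ} (hT : N ≤ T) : TemporalK.slice k T = 0 := by
  unfold TemporalK.slice
  apply Finset.sum_eq_zero
  intro I hI
  obtain ⟨-, hI1, hI2⟩ := Finset.mem_filter.mp hI
  have h2 := I.val.2.isLt
  omega

lemma slice_all {k k' : TempEl N K} (h : SnapEq k k') (T : ℕ) : TemporalK.slice k T = TemporalK.slice k' T := by
  by_cases hT : T < N
  · exact h T hT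
  · rw [slice_eq_zero_of_ge k (le_of_not_gt hT), slice_eq_zero_of_ge k' (le_of_not_gt hT)]

lemma changepoint_zero (𝒯 : TempEl N K) : Changepoint 𝒯 0 := Or.inl rfl

lemma changepoint_congr {k k' : TempEl N K} (h : SnapEq k k') (T : ℕ) :
    Changepoint k T ↔ Changepoint k' T := by
  unfold Changepoint
  rw [slice_all h, slice_all h]

lemma coal_congr {k k' : TempEl N K} (h : SnapEq k k') : coal k = coal k' := by
  funext I
  unfold coal
  have hcp : CPInterval k I ↔ CPInterval k' I := by
    unfold CPInterval
    simp only [changepoint_congr h]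
  rw [slice_all h]
  by_cases hI : CPInterval k' I
  · rw [if_pos (hcp.mpr hI), if_pos hI]
  · rw [if_neg (fun hc => hI (hcp.mp hc)), if_neg hI]

lemma slice_eq_of_no_cp (𝒯 : TempEl N K) {b T : ℕ} (hb : b ≤ T)
    (h : ∀ t, b < t → t ≤ T → ¬Changepoint 𝒯 t) : TemporalK.slice 𝒯 b = TemporalK.slice 𝒯 T := by
  induction T, hb using Nat.le_induction with
  | base => rfl
  | succ T hT ih =>
    have h1 := h (T + 1) (by omega) le_rfl
    unfold Changepoint at h1
    push_neg at h1
    have h2 : TemporalK.slice 𝒯 T = TemporalK.slice 𝒯 (T + 1) := by simpa using h1.2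
    rw [ih (fun t h1 h2' => h t h1 (by omega)), h2]

lemma slice_coal (𝒯 : TempEl N K) {T : ℕ} (hT : T < N) :
    TemporalK.slice (coal 𝒯) T = TemporalK.slice 𝒯 T := by
  classical
  set b0 := Nat.findGreatest (Changepoint 𝒯) T with hb0def
  have hb0le : b0 ≤ T := Nat.findGreatest_le T
  have hb0cp : Changepoint 𝒯 b0 :=
    Nat.findGreatest_spec (Nat.zero_le T) (changepoint_zero 𝒯)
  have hb0max : ∀ t, b0 < t → t ≤ T → ¬Changepoint 𝒯 t := fun t h1 h2 =>
    Nat.findGreatest_is_greatest h1 h2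
  have hex : ∃ e, T < e ∧ (Changepoint 𝒯 e ∨ e = N) := ⟨N, hT, Or.inr rfl⟩
  set e0 := Nat.find hex with he0def
  obtain ⟨he0T, he0cp⟩ := Nat.find_spec hex
  have he0N : e0 ≤ N := Nat.find_min' hex ⟨hT, Or.inr rfl⟩
  have he0min : ∀ e, e < e0 → ¬(T < e ∧ (Changepoint 𝒯 e ∨ e = N)) := fun e h =>
    Nat.find_min hex h
  have hb0e0 : b0 < e0 := lt_of_le_of_lt hb0le he0T
  set I0 : TInterval N := ⟨(⟨b0, by omega⟩, ⟨e0, by omega⟩), by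
    simp only [Fin.mk_lt_mk]; exact hb0e0⟩ with hI0def
  have hI0cp : CPInterval 𝒯 I0 := by
    refine ⟨hb0cp, Or.imp_right (fun h => h) he0cp, ?_⟩
    intro t h1 h2
    by_cases ht : t ≤ T
    · exact hb0max t h1 ht
    · intro hc
      exact he0min t h2 ⟨by omega, Or.inl hc⟩
  have hI0mem : I0 ∈ Finset.univ.filter (fun I : TInterval N => Contains I T) := by
    exact Finset.mem_filter.mpr ⟨Finset.mem_univ _, hb0le, he0T⟩
  have huniq : ∀ J : TInterval N, Contains J T → CPInterval 𝒯 J → J = I0 := by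
    intro J hJc hJcp
    obtain ⟨hJ1, hJ2, hJ3⟩ := hJcp
    obtain ⟨hc1, hc2⟩ := hJc
    have hb : (J.val.1 : ℕ) = b0 := by
      have hle : (J.val.1 : ℕ) ≤ b0 := Nat.le_findGreatest hc1 hJ1
      by_contra hne
      have hlt : (J.val.1 : ℕ) < b0 := by omega
      exact hJ3 b0 hlt (by omega) hb0cp
    have he : (J.val.2 : ℕ) = e0 := by
      have hle : e0 ≤ (J.val.2 : ℕ) := Nat.find_min' hex ⟨hc2, hJ2⟩
      by_contra hne
      have hlt : e0 < (J.val.2 : ℕ) := by omega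
      have he0cp' : Changepoint 𝒯 e0 := by
        rcases he0cp with h | h
        · exact h
        · exfalso; have := J.val.2.isLt; omega
      exact hJ3 e0 (by omega) hlt he0cp'
    apply Subtype.ext
    apply Prod.ext
    · exact Fin.ext (by simpa using hb)
    · exact Fin.ext (by simpa using he)
  unfold TemporalK.slice
  rw [Finset.sum_eq_single_of_mem I0 hI0mem]
  · show coal 𝒯 I0 = _
    unfold coal
    rw [if_pos hI0cp]
    exact slice_eq_of_no_cp 𝒯 hb0le hb0max
  · intro J hJ hne
    simp only [Finset.mem_filter, Finset.mem_univ, true_and] at hJ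
    show coal 𝒯 J = 0
    unfold coal
    rw [if_neg]
    intro hc
    exact hne (huniq J hJ hc)

noncomputable def sing {N : ℕ} [CommSemiring K] (f : Fin N → K) : TempEl N K :=
  fun I =>
    if h : (I.val.2 : ℕ) = (I.val.1 : ℕ) + 1 then
      f ⟨(I.val.1 : ℕ), by have := I.val.2.isLt; omega⟩
    else 0

lemma enc_eq (f : Fin N → K) : enc f = coal (sing f) := rfl

lemma slice_sing (f : Fin N → K) {T : ℕ} (hT : T < N) :
    TemporalK.slice (sing f) T = f ⟨T, hT⟩ := by
  classical
  set I0 : TInterval N := ⟨(⟨T, by omega⟩, ⟨T + 1, by omega⟩), by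
    simp only [Fin.mk_lt_mk]; omega⟩ with hI0def
  have hI0mem : I0 ∈ Finset.univ.filter (fun I : TInterval N => Contains I T) := by
    exact Finset.mem_filter.mpr ⟨Finset.mem_univ _, le_refl T, Nat.lt_succ_self T⟩
  unfold TemporalK.slice
  rw [Finset.sum_eq_single_of_mem I0 hI0mem]
  · show sing f I0 = _
    unfold sing
    rw [dif_pos rfl]
  · intro J hJ hne
    obtain ⟨-, hJ1, hJ2⟩ := Finset.mem_filter.mp hJ
    show sing f J = 0
    unfold sing
    rw [dif_neg]
    intro hc
    apply hne
    have h1 : (J.val.1 : ℕ) = T := by omega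
    have h2 : (J.val.2 : ℕ) = T + 1 := by omega
    apply Subtype.ext
    apply Prod.ext
    · exact Fin.ext (by simpa using h1)
    · exact Fin.ext (by simpa using h2)

end TemporalKAux


theorem enc_bijective_onto_coalesced {N : ℕ} (hN : 1 ≤ N)
    {K : Type*} [CommSemiring K] :
    Function.Injective (enc : (Fin N → K) → TempEl N K) ∧
    (∀ k : TempEl N K, (∃ f : Fin N → K, enc f = k) ↔ Coalesced k) := by
  constructor
  · intro f g h
    funext T
    have h1 : TemporalK.slice (enc f) (T : ℕ) = TemporalK.slice (enc g) (T : ℕ) := by rw [h]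
    rw [TemporalKAux.enc_eq, TemporalKAux.enc_eq,
      TemporalKAux.slice_coal _ T.isLt, TemporalKAux.slice_coal _ T.isLt,
      TemporalKAux.slice_sing _ T.isLt, TemporalKAux.slice_sing _ T.isLt] at h1
    simpa using h1
  · intro k
    constructor
    · rintro ⟨f, rfl⟩
      exact ⟨TemporalKAux.sing f, TemporalKAux.enc_eq f⟩
    · rintro ⟨𝒯, rfl⟩
      refine ⟨fun T => TemporalK.slice 𝒯 (T : ℕ), ?_⟩
      rw [TemporalKAux.enc_eq]
      apply TemporalKAux.coal_congr
      intro T hT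
      rw [TemporalKAux.slice_sing _ hT]
end
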